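/- arXiv:2501.01111 — 2 statements merged into one kernel-verified Lean document; each statement's English description precedes it below -/
import Mathlib

section
/- Let N, M be positive integers and define φ : ℝ^{NM} → ℝ^{NM} as the blockwise softmax layer: for s ∈ ℝ^{NM} (indexed by agent–resource pairs (i,m)) and each resource m, the m-th block of φ(s) is softmax(s_{1,m}, …, s_{N,m}), where softmax : ℝ^N → [0,1]^N is defined by softmax_i(u) = e^{u_i} / Σ_{k=1}^N e^{u_k}. Then φ is 1-Lipschitz from ℓ1 to ℓ1: for all s, s′ ∈ ℝ^{NM}, ‖φ(s) − φ(s′)‖₁ ≤ ‖s − s′‖₁. -/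
/-! Changing one logit `u k` to `c` rescales all other softmax weights by a common factor, so
the ℓ1 change of the output is twice the change of the `k`-th weight `e^{u k} / (S + e^{u k})`,
where `S = Σ_{i ≠ k} e^{u i}`. As a function of `u k` this weight is a sigmoid, whose derivative
is at most `1/4`; so one coordinate change costs at most `|c - u k| / 2`, and changing the
coordinates one at a time shows that softmax is even `1/2`-Lipschitz for ℓ1, block by block. -/

open Finset

noncomputable def blockSoftmax {N M : ℕ} (s : Fin N → Fin M → ℝ) (i : Fin N) (m : Fin M) : ℝ :=
  Real.exp (s i m) / ∑ k, Real.exp (s k m)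

open Real

theorem abs_sigmoid_sub_sigmoid_le (x y : ℝ) : |sigmoid x - sigmoid y| ≤ |x - y| / 4 := by
  have hderiv : ∀ z, ‖deriv sigmoid z‖ ≤ 1 / 4 := fun z => by
    rw [deriv_sigmoid, Real.norm_eq_abs, abs_of_nonneg (mul_nonneg (sigmoid_nonneg z)
      (sub_nonneg.2 (sigmoid_le_one z)))]
    nlinarith [sq_nonneg (sigmoid z - 1 / 2)]
  have := Convex.norm_image_sub_le_of_norm_deriv_le (fun z _ => differentiableAt_sigmoid)
    (fun z _ => hderiv z) convex_univ (Set.mem_univ y) (Set.mem_univ x)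
  simp only [Real.norm_eq_abs] at this
  linarith

theorem abs_exp_div_add_exp_sub_le {S : ℝ} (hS : 0 ≤ S) (x y : ℝ) :
    |exp x / (S + exp x) - exp y / (S + exp y)| ≤ |x - y| / 4 := by
  rcases hS.eq_or_lt with rfl | hSpos
  · simp only [zero_add, div_self (exp_ne_zero _), sub_self, abs_zero]
    positivity
  have hsig : ∀ z, exp z / (S + exp z) = sigmoid (z - log S) := fun z => by
    rw [sigmoid_def, neg_sub, exp_sub, exp_log hSpos]
    field_simp
    ring
  simpa only [hsig, sub_sub_sub_cancel_right] using
    abs_sigmoid_sub_sigmoid_le (x - log S) (y - log S)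

noncomputable def softmax {ι : Type*} [Fintype ι] (u : ι → ℝ) (i : ι) : ℝ :=
  exp (u i) / ∑ k, exp (u k)

theorem sum_abs_softmax_update_sub_le {ι : Type*} [Fintype ι] [DecidableEq ι] (u : ι → ℝ)
    (k : ι) (c : ℝ) :
    ∑ i, |softmax (Function.update u k c) i - softmax u i| ≤ 1 / 2 * |c - u k| := by
  set S := ∑ i ∈ univ.erase k, exp (u i)
  have hS : 0 ≤ S := sum_nonneg fun _ _ => (exp_pos _).le
  have hpos : ∀ z, S + exp z ≠ 0 := fun z => (add_pos_of_nonneg_of_pos hS (exp_pos z)).ne'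
  have hZ : ∑ i, exp (u i) = S + exp (u k) := by
    rw [← add_sum_erase _ _ (mem_univ k), add_comm]
  have hZ' : ∑ i, exp (Function.update u k c i) = S + exp c := by
    rw [← add_sum_erase _ _ (mem_univ k), Function.update_self, add_comm]
    congr 1
    exact sum_congr rfl fun i hi => by rw [Function.update_of_ne (ne_of_mem_erase hi)]
  have hrest : ∑ i ∈ univ.erase k, |softmax (Function.update u k c) i - softmax u i|
      = |exp c / (S + exp c) - exp (u k) / (S + exp (u k))| := by
    have hterm : ∀ i ∈ univ.erase k, |softmax (Function.update u k c) i - softmax u i|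
        = exp (u i) * |1 / (S + exp c) - 1 / (S + exp (u k))| := fun i hi => by
      rw [softmax, softmax, hZ, hZ', Function.update_of_ne (ne_of_mem_erase hi),
        div_eq_mul_one_div (exp (u i)), div_eq_mul_one_div (exp (u i)), ← mul_sub, abs_mul,
        abs_of_pos (exp_pos _)]
    calc ∑ i ∈ univ.erase k, |softmax (Function.update u k c) i - softmax u i|
        = S * |1 / (S + exp c) - 1 / (S + exp (u k))| := by rw [sum_congr rfl hterm, ← sum_mul]
      _ = |-(S * (1 / (S + exp c) - 1 / (S + exp (u k))))| := by
        rw [abs_neg, abs_mul, abs_of_nonneg hS]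
      _ = |exp c / (S + exp c) - exp (u k) / (S + exp (u k))| := by
        congr 1
        field_simp [hpos c, hpos (u k)]
        ring
  calc ∑ i, |softmax (Function.update u k c) i - softmax u i|
      = |exp c / (S + exp c) - exp (u k) / (S + exp (u k))|
        + ∑ i ∈ univ.erase k, |softmax (Function.update u k c) i - softmax u i| := by
        rw [← add_sum_erase _ _ (mem_univ k), softmax, softmax, hZ, hZ', Function.update_self]
    _ = 2 * |exp c / (S + exp c) - exp (u k) / (S + exp (u k))| := by rw [hrest]; ring
    _ ≤ 2 * (|c - u k| / 4) := by gcongr; exact abs_exp_div_add_exp_sub_le hS _ _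
    _ = 1 / 2 * |c - u k| := by ring

theorem sum_abs_sub_le_mul_of_update {ι κ : Type*} [Fintype ι] [DecidableEq ι] [Fintype κ]
    {K : ℝ} (f : (ι → ℝ) → κ → ℝ)
    (hf : ∀ u k c, ∑ j, |f (Function.update u k c) j - f u j| ≤ K * |c - u k|) (u v : ι → ℝ) :
    ∑ j, |f u j - f v j| ≤ K * ∑ i, |u i - v i| := by
  suffices h : ∀ T : Finset ι, ∀ x, (∀ i ∉ T, x i = v i) →
      ∑ j, |f x j - f v j| ≤ K * ∑ i ∈ T, |x i - v i| from
    h univ u fun i hi => absurd (mem_univ i) hi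
  intro T
  induction T using Finset.induction_on with
  | empty =>
    intro x hx
    simp [funext fun i => hx i (notMem_empty i)]
  | insert k T hk ih =>
    intro x hx
    set w := Function.update x k (v k) with hw_def
    have hw : ∀ i ∉ T, w i = v i := fun i hi => by
      by_cases hik : i = k
      · rw [hik, hw_def, Function.update_self]
      · rw [hw_def, Function.update_of_ne hik]; exact hx i (by simp [hik, hi])
    have hwT : ∑ i ∈ T, |w i - v i| = ∑ i ∈ T, |x i - v i| :=
      sum_congr rfl fun i hi => by
        rw [hw_def, Function.update_of_ne (ne_of_mem_of_not_mem hi hk)]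
    calc ∑ j, |f x j - f v j|
        ≤ ∑ j, (|f w j - f x j| + |f w j - f v j|) :=
          sum_le_sum fun j _ => abs_sub_comm (f x j) (f w j) ▸ abs_sub_le _ _ _
      _ ≤ K * |v k - x k| + K * ∑ i ∈ T, |w i - v i| := by
          rw [sum_add_distrib]; exact add_le_add (hf x k (v k)) (ih w hw)
      _ = K * ∑ i ∈ insert k T, |x i - v i| := by
          rw [hwT, sum_insert hk, abs_sub_comm, mul_add]

theorem sum_abs_softmax_sub_le {ι : Type*} [Fintype ι] (u v : ι → ℝ) :
    ∑ i, |softmax u i - softmax v i| ≤ 1 / 2 * ∑ i, |u i - v i| := by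
  classical
  exact sum_abs_sub_le_mul_of_update softmax sum_abs_softmax_update_sub_le u v

theorem stmt_9_general (N M : ℕ) (s s' : Fin N → Fin M → ℝ) :
    ∑ i, ∑ m, |blockSoftmax s i m - blockSoftmax s' i m| ≤ ∑ i, ∑ m, |s i m - s' i m| := by
  rw [sum_comm, sum_comm (f := fun i m => |s i m - s' i m|)]
  refine sum_le_sum fun m _ => ?_
  calc ∑ i, |blockSoftmax s i m - blockSoftmax s' i m|
      ≤ 1 / 2 * ∑ i, |s i m - s' i m| := sum_abs_softmax_sub_le (fun i => s i m) (fun i => s' i m)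
    _ ≤ ∑ i, |s i m - s' i m| := by
      have : 0 ≤ ∑ i, |s i m - s' i m| := sum_nonneg fun _ _ => abs_nonneg _
      linarith

/-- the blockwise softmax layer is 1-Lipschitz from ℓ1 to ℓ1:
`‖φ(s) − φ(s')‖₁ ≤ ‖s − s'‖₁` for all `s, s' ∈ ℝ^{NM}`. -/
theorem stmt_9 (N M : ℕ) (hN : 0 < N) (hM : 0 < M) (s s' : Fin N → Fin M → ℝ) :
    ∑ i, ∑ m, |blockSoftmax s i m - blockSoftmax s' i m| ≤ ∑ i, ∑ m, |s i m - s' i m| :=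
  stmt_9_general N M s s'
end

section
/- Assume the boundedness assumption holds for the mechanism class M on profile space Y with constant ψ > 1. Let U = { y ↦ (u_1^ω(y), …, u_N^ω(y)) : f^ω ∈ M } with the ℓ_{∞,1} distance, and let exp̄∘U = { y ↦ Σ_{i=1}^N ( sup_{y_i'} u_i^ω(y_i') − u_i^ω(y) ) : f^ω ∈ M }, where for y = (v,x,b) the i-th supremum is over all unilateral misreports y_i' = ((v_i', v_{−i}), (x_i', x_{−i}), b) ∈ Y of agent i, with the sup-absolute-difference distance. Then for every ε > 0: N∞(exp̄∘U, ε) ≤ N∞(U, ε/(2N)). -/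
/-!
Replacing a mechanism by one whose utility profile is `δ`-close in `ℓ_{∞,1}` moves every
utility, hence also every supremum of utilities over misreports, by at most `δ`. So each of
the `N` regret terms moves by at most `2δ` and their sum by at most `2Nδ`. Choosing a
mechanism behind every element of an `ε/(2N)`-cover of the utility profiles therefore
yields an `ε`-cover of the summed regrets, of no larger cardinality.
-/

open Finset

/-- The utility of agent `i`: `u_i(a,v,x) = Σ_m v_{i,m} · min(a_{i,m}, x_{i,m})`. -/
def util {N M : ℕ} (a v x : Fin N → Fin M → ℝ) (i : Fin N) : ℝ :=
  ∑ m, v i m * min (a i m) (x i m)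

/-- Feasibility: `a ∈ A_{b,x}`. -/
def feasible {N M : ℕ} (b : Fin M → ℝ) (x a : Fin N → Fin M → ℝ) : Prop :=
  (∀ i m, 0 ≤ a i m ∧ a i m ≤ x i m) ∧ ∀ m, ∑ i, a i m ≤ b m

/-- A profile `y = (v, x, b)`. -/
abbrev Profile (N M : ℕ) :=
  (Fin N → Fin M → ℝ) × (Fin N → Fin M → ℝ) × (Fin M → ℝ)

/-- Utility of agent `i` under mechanism `f` at profile `y`: `u_i^ω(y)`. -/
def mutil {N M : ℕ} (f : Profile N M → (Fin N → Fin M → ℝ)) (i : Fin N)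
    (y : Profile N M) : ℝ :=
  util (f y) y.1 y.2.1 i

/-- The set of unilateral misreports of agent `i` at profile `y` within `Y`. -/
def misreports {N M : ℕ} (Y : Set (Profile N M)) (i : Fin N) (y : Profile N M) :
    Set (Profile N M) :=
  {y' ∈ Y | y'.2.2 = y.2.2 ∧ ∀ j, j ≠ i → y'.1 j = y.1 j ∧ y'.2.1 j = y.2.1 j}

/-- Generic covering number: the minimal cardinality (in `ℕ∞`) of a subset `G ⊆ F`
such that every `f ∈ F` is `close` to some `g ∈ G`. -/
noncomputable def covN {α : Type*} (F : Set α) (close : α → α → Prop) : ℕ∞ :=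
  sInf ((fun G : Finset α => (G.card : ℕ∞)) ''
    {G : Finset α | ↑G ⊆ F ∧ ∀ f ∈ F, ∃ g ∈ G, close f g})

/-- `ℓ_{∞,1}`-closeness at scale `ε` for `ℝ^{NM}`-valued mechanisms, over `Y`. -/
def closeM {N M : ℕ} (Y : Set (Profile N M)) (ε : ℝ)
    (f g : Profile N M → (Fin N → Fin M → ℝ)) : Prop :=
  ∀ y ∈ Y, ∑ i, ∑ m, |f y i m - g y i m| ≤ ε

/-- sup-absolute-difference closeness at scale `ε` for scalar functions, over `Y`. -/
def closeS {N M : ℕ} (Y : Set (Profile N M)) (ε : ℝ)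
    (g g' : Profile N M → ℝ) : Prop :=
  ∀ y ∈ Y, |g y - g' y| ≤ ε

/-- `ℓ_{∞,1}`-closeness at scale `ε` for `ℝ^N`-valued functions, over `Y`. -/
def closeV {N M : ℕ} (Y : Set (Profile N M)) (ε : ℝ)
    (g g' : Profile N M → (Fin N → ℝ)) : Prop :=
  ∀ y ∈ Y, ∑ i, |g y i - g' y i| ≤ ε

/-- The boundedness assumption for a mechanism class `Mcl` on a profile space `Y`
with constant `ψ`: feasibility, `1/ψ ≤ u_i^ω(y) ≤ ψ`, and `Σ_m v_{i,m} ≤ 1`. -/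
def BoundedClass {N M : ℕ} (Y : Set (Profile N M))
    (Mcl : Set (Profile N M → (Fin N → Fin M → ℝ))) (ψ : ℝ) : Prop :=
  (∀ f ∈ Mcl, ∀ y ∈ Y, feasible y.2.2 y.2.1 (f y)) ∧
  (∀ f ∈ Mcl, ∀ y ∈ Y, ∀ i, 1/ψ ≤ mutil f i y ∧ mutil f i y ≤ ψ) ∧
  (∀ y ∈ Y, ∀ i : Fin N, ∑ m, y.1 i m ≤ 1)

theorem covN_image_le_of_close {α β γ : Type*} {F : Set γ} {T : γ → α} {S : γ → β}
    {close₁ : α → α → Prop} {close₂ : β → β → Prop}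
    (h : ∀ f ∈ F, ∀ f' ∈ F, close₁ (T f) (T f') → close₂ (S f) (S f')) :
    covN (S '' F) close₂ ≤ covN (T '' F) close₁ := by
  classical
  refine le_sInf ?_
  rintro _ ⟨G, ⟨hGF, hGcov⟩, rfl⟩
  choose σ hσF hσT using fun g : G => hGF g.2
  refine sInf_le_of_le ⟨G.attach.image (S ∘ σ), ⟨?_, ?_⟩, rfl⟩ ?_
  · intro b hb
    obtain ⟨g, -, rfl⟩ := mem_image.mp hb
    exact ⟨σ g, hσF g, rfl⟩
  · rintro _ ⟨f, hf, rfl⟩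
    obtain ⟨g, hg, hfg⟩ := hGcov (T f) ⟨f, hf, rfl⟩
    refine ⟨S (σ ⟨g, hg⟩), mem_image_of_mem _ (mem_attach _ _), h f hf _ (hσF _) ?_⟩
    rwa [hσT]
  · simpa only [Nat.cast_le] using card_image_le.trans (card_attach (s := G)).le

theorem csSup_image_le_csSup_image_add {ι : Type*} {s : Set ι} (hs : s.Nonempty)
    {u v : ι → ℝ} (hv : BddAbove (v '' s)) {δ : ℝ} (h : ∀ x ∈ s, u x ≤ v x + δ) :
    sSup (u '' s) ≤ sSup (v '' s) + δ :=
  csSup_le (hs.image u) <| Set.forall_mem_image.mpr fun x hx =>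
    (h x hx).trans (add_le_add_left (le_csSup hv (Set.mem_image_of_mem v hx)) δ)

theorem abs_csSup_image_sub_csSup_image_le {ι : Type*} {s : Set ι} (hs : s.Nonempty)
    {u v : ι → ℝ} (hu : BddAbove (u '' s)) (hv : BddAbove (v '' s)) {δ : ℝ}
    (h : ∀ x ∈ s, |u x - v x| ≤ δ) :
    |sSup (u '' s) - sSup (v '' s)| ≤ δ := by
  rw [abs_sub_le_iff, sub_le_iff_le_add', sub_le_iff_le_add']
  constructor
  · exact csSup_image_le_csSup_image_add hs hv fun x hx => by
      linarith [(abs_le.mp (h x hx)).2]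
  · exact csSup_image_le_csSup_image_add hs hu fun x hx => by
      linarith [(abs_le.mp (h x hx)).1]

theorem closeV.abs_sub_le {N M : ℕ} {Y : Set (Profile N M)} {δ : ℝ}
    {g g' : Profile N M → Fin N → ℝ} (h : closeV Y δ g g') {y : Profile N M} (hy : y ∈ Y)
    (i : Fin N) : |g y i - g' y i| ≤ δ :=
  (single_le_sum (f := fun j => |g y j - g' y j|) (fun _ _ => abs_nonneg _)
    (mem_univ i)).trans (h y hy)

section Regret

variable {N M : ℕ} {Y : Set (Profile N M)}

theorem self_mem_misreports {y : Profile N M} (hy : y ∈ Y) (i : Fin N) :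
    y ∈ misreports Y i y :=
  ⟨hy, rfl, fun _ _ => ⟨rfl, rfl⟩⟩

theorem misreports_subset (i : Fin N) (y : Profile N M) : misreports Y i y ⊆ Y :=
  fun _ hy' => hy'.1

noncomputable def regret (Y : Set (Profile N M)) (f : Profile N M → Fin N → Fin M → ℝ)
    (i : Fin N) (y : Profile N M) : ℝ :=
  sSup ((fun y' => mutil f i y') '' misreports Y i y) - mutil f i y

theorem abs_regret_sub_regret_le {f f' : Profile N M → Fin N → Fin M → ℝ} {i : Fin N}
    {ψ δ : ℝ} (hf : ∀ y ∈ Y, mutil f i y ≤ ψ) (hf' : ∀ y ∈ Y, mutil f' i y ≤ ψ)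
    (hδ : ∀ y ∈ Y, |mutil f i y - mutil f' i y| ≤ δ) {y : Profile N M} (hy : y ∈ Y) :
    |regret Y f i y - regret Y f' i y| ≤ 2 * δ := by
  have bdd {g : Profile N M → Fin N → Fin M → ℝ} (hg : ∀ y ∈ Y, mutil g i y ≤ ψ) :
      BddAbove ((fun y' => mutil g i y') '' misreports Y i y) :=
    ⟨ψ, Set.forall_mem_image.mpr fun y' hy' => hg y' (misreports_subset i y hy')⟩
  have hsup := abs_csSup_image_sub_csSup_image_le ⟨y, self_mem_misreports hy i⟩ (bdd hf)
    (bdd hf') fun y' hy' => hδ y' (misreports_subset i y hy')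
  calc |regret Y f i y - regret Y f' i y|
      ≤ |sSup ((fun y' => mutil f i y') '' misreports Y i y) -
          sSup ((fun y' => mutil f' i y') '' misreports Y i y)| +
        |mutil f i y - mutil f' i y| := by
        rw [regret, regret, sub_sub_sub_comm]
        exact abs_sub _ _
    _ ≤ 2 * δ := by linarith [hδ y hy]

theorem closeS_sum_regret_of_closeV {Mcl : Set (Profile N M → Fin N → Fin M → ℝ)} {ψ : ℝ}
    (hbd : BoundedClass Y Mcl ψ) {f f' : Profile N M → Fin N → Fin M → ℝ} (hf : f ∈ Mcl)
    (hf' : f' ∈ Mcl) {δ : ℝ}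
    (h : closeV Y δ (fun y i => mutil f i y) (fun y i => mutil f' i y)) :
    closeS Y (N * (2 * δ)) (fun y => ∑ i, regret Y f i y) (fun y => ∑ i, regret Y f' i y) := by
  intro y hy
  calc |∑ i, regret Y f i y - ∑ i, regret Y f' i y|
      ≤ ∑ i, |regret Y f i y - regret Y f' i y| := by
        rw [← sum_sub_distrib]
        exact abs_sum_le_sum_abs _ _
    _ ≤ ∑ _i : Fin N, 2 * δ :=
        sum_le_sum fun i _ => abs_regret_sub_regret_le
          (fun y hy => (hbd.2.1 f hf y hy i).2) (fun y hy => (hbd.2.1 f' hf' y hy i).2)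
          (fun y hy => h.abs_sub_le hy i) hy
    _ = N * (2 * δ) := by simp

end Regret

theorem stmt_12_general (N M : ℕ) (hN : 0 < N)
    (Y : Set (Profile N M)) (Mcl : Set (Profile N M → (Fin N → Fin M → ℝ)))
    (ψ : ℝ) (hbd : BoundedClass Y Mcl ψ)
    (ε : ℝ) :
    covN
      ((fun f => fun y => ∑ i,
          (sSup ((fun y' => mutil f i y') '' misreports Y i y) - mutil f i y)) '' Mcl)
      (closeS Y ε) ≤
    covN ((fun f => fun y => fun i => mutil f i y) '' Mcl) (closeV Y (ε / (2 * N))) := by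
  have hε : (N : ℝ) * (2 * (ε / (2 * N))) = ε := by
    field_simp [Nat.cast_ne_zero.mpr hN.ne']
  refine covN_image_le_of_close (S := fun f y => ∑ i, regret Y f i y) fun f hf f' hf' h => ?_
  simpa only [hε] using closeS_sum_regret_of_closeV hbd hf hf' h

/-- under the boundedness assumption with constant `ψ > 1`,
`N∞(exp̄∘U, ε) ≤ N∞(U, ε/(2N))`, where `U = {y ↦ (u_1^ω(y),…,u_N^ω(y))}` and
`exp̄∘U = {y ↦ Σ_i (sup_{y_i'} u_i^ω(y_i') − u_i^ω(y))}`. -/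
theorem stmt_12 (N M : ℕ) (hN : 0 < N) (hM : 0 < M)
    (Y : Set (Profile N M)) (Mcl : Set (Profile N M → (Fin N → Fin M → ℝ)))
    (ψ : ℝ) (hψ : 1 < ψ) (hbd : BoundedClass Y Mcl ψ)
    (ε : ℝ) (hε : 0 < ε) :
    covN
      ((fun f => fun y => ∑ i,
          (sSup ((fun y' => mutil f i y') '' misreports Y i y) - mutil f i y)) '' Mcl)
      (closeS Y ε) ≤
    covN ((fun f => fun y => fun i => mutil f i y) '' Mcl) (closeV Y (ε / (2 * N))) :=
  stmt_12_general N M hN Y Mcl ψ hbd ε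
end
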